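/- arXiv:2403.10274 — 7 statements merged into one kernel-verified Lean document; each statement's English description precedes it below -/
import Mathlib

section
/- The linear map Cl(V,q) → ⋀V given by a ↦ a • 1, where • denotes the Clifford module action on the exterior algebra via ι + o, is an isomorphism of vector spaces. In particular, dim Cl(V,q) = 2^{dim V}. -/
/-!
Since `⋀V` is `Cl(V, 0)`, the map `a ↦ a • 1` is Chevalley's change-of-form map
`Cl(V, q) → Cl(V, 0)` along the bilinear form `-(·|·)`, whose quadratic form is `0 - q`; change
of form is invertible, its inverse being the change of form along `+(·|·)`. The dimension count
then comes from the basis of `⋀V` indexed by the subsets of a basis of `V`.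
-/

open CliffordAlgebra

/-- The bilinear form associated to `q`: `(v|w) = ½(q(v+w) − q(v) − q(w))`. -/
noncomputable def halfPolar {K V : Type*} [Field K] [CharZero K] [AddCommGroup V] [Module K V]
    (q : QuadraticForm K V) : V →ₗ[K] Module.Dual K V :=
  (2⁻¹ : K) • (QuadraticMap.polarBilin q)

theorem CliffordAlgebra.apply_one_eq_changeForm {R M : Type*} [CommRing R] [AddCommGroup M]
    [Module R M] {Q Q' : QuadraticForm R M} {B : LinearMap.BilinForm R M}
    (h : B.toQuadraticMap = Q' - Q)
    (φ : CliffordAlgebra Q →ₐ[R] Module.End R (CliffordAlgebra Q'))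
    (hφ : ∀ v : M, φ (ι Q v) = LinearMap.mulLeft R (ι Q' v) - contractLeft (B v))
    (a : CliffordAlgebra Q) : φ a 1 = changeForm h a := by
  induction a using CliffordAlgebra.left_induction with
  | algebraMap r =>
    rw [AlgHom.commutes, changeForm_algebraMap, Module.algebraMap_end_apply,
      Algebra.algebraMap_eq_smul_one]
  | add x y hx hy => rw [map_add, map_add, LinearMap.add_apply, hx, hy]
  | ι_mul m x hx =>
    rw [map_mul, Module.End.mul_apply, hx, hφ, changeForm_ι_mul, LinearMap.sub_apply,
      LinearMap.mulLeft_apply]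

theorem ExteriorAlgebra.finrank_eq {R M : Type*} [CommRing R] [StrongRankCondition R]
    [AddCommGroup M] [Module R M] [Module.Free R M] [Module.Finite R M] :
    Module.finrank R (ExteriorAlgebra R M) = 2 ^ Module.finrank R M := by
  rw [Module.finrank_eq_card_basis (Module.finBasis R M).ExteriorAlgebra, Fintype.card_finset,
    Fintype.card_fin]

theorem toQuadraticMap_halfPolar {K V : Type*} [Field K] [CharZero K] [AddCommGroup V]
    [Module K V] (q : QuadraticForm K V) :
    LinearMap.BilinMap.toQuadraticMap (halfPolar q) = q := by
  ext v
  rw [LinearMap.BilinMap.toQuadraticMap_apply, halfPolar, LinearMap.smul_apply,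
    LinearMap.smul_apply, QuadraticMap.polarBilin_apply_apply, QuadraticMap.polar_self,
    two_nsmul, smul_eq_mul, ← two_mul, inv_mul_cancel_left₀ two_ne_zero]

/-- the linear map `Cl(V,q) → ⋀V`, `a ↦ a • 1`, where `•` is the Clifford
module action on the exterior algebra via `v ↦ ι(v) + o(v)`, is an isomorphism of vector
spaces; in particular `dim Cl(V,q) = 2 ^ dim V`.  Here `φ` is the algebra homomorphism
`Cl(V,q) → End(⋀V)` extending `v ↦ ι(v) + o(v)`. -/
theorem stmt1 {K V : Type*} [Field K] [CharZero K]
    [AddCommGroup V] [Module K V] [FiniteDimensional K V] (q : QuadraticForm K V)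
    (φ : CliffordAlgebra q →ₐ[K] Module.End K (ExteriorAlgebra K V))
    (hφ : ∀ v : V, φ (ι q v) =
      LinearMap.mulLeft K (ExteriorAlgebra.ι K v)
        + contractLeft (Q := (0 : QuadraticForm K V)) (halfPolar q v)) :
    Function.Bijective (fun a : CliffordAlgebra q => φ a 1) ∧
    Module.finrank K (CliffordAlgebra q) = 2 ^ Module.finrank K V := by
  have hB : LinearMap.BilinMap.toQuadraticMap (-halfPolar q) = (0 : QuadraticForm K V) - q := by
    rw [LinearMap.BilinMap.toQuadraticMap_neg, toQuadraticMap_halfPolar, zero_sub]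
  have hφ' (v : V) : φ (ι q v) =
      LinearMap.mulLeft K (ExteriorAlgebra.ι K v) - contractLeft ((-halfPolar q) v) := by
    rw [hφ, LinearMap.neg_apply, map_neg, sub_neg_eq_add]
  have hact : (fun a : CliffordAlgebra q => φ a 1) = changeFormEquiv hB :=
    funext (apply_one_eq_changeForm hB φ hφ')
  refine ⟨hact ▸ (changeFormEquiv hB).bijective, ?_⟩
  rw [(changeFormEquiv hB).finrank_eq, ExteriorAlgebra.finrank_eq]
end

section
/- With notation as in the spinor embedding: if H is a maximal isotropic subspace of (V,q) and ω_H spans the one-dimensional space S_H = {ω ∈ Cl(V)f : v·ω = 0 for all v ∈ H}, then H = {v ∈ V : v·ω_H = 0}. In particular, the assignment H ↦ [ω_H] ∈ P(Cl(V)f) is injective on the set of maximal isotropic subspaces. -/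
open CliffordAlgebra

/-- A subspace on which the quadratic form vanishes. -/
def IsIsotropicSub {K V : Type*} [Field K] [AddCommGroup V] [Module K V]
    (q : QuadraticForm K V) (W : Submodule K V) : Prop :=
  ∀ v ∈ W, q v = 0

/-- A maximal isotropic subspace. -/
def IsMaxIsotropic {K V : Type*} [Field K] [AddCommGroup V] [Module K V]
    (q : QuadraticForm K V) (W : Submodule K V) : Prop :=
  IsIsotropicSub q W ∧ ∀ W' : Submodule K V, IsIsotropicSub q W' → W ≤ W' → W' = W

/-- The space `S_H = {ω ∈ Cl(V)f : v·ω = 0 for all v ∈ H}`, where `f` is the product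
of the Clifford images of the basis `fb` of `F`. -/
def spinorSet {K V : Type*} [Field K] [AddCommGroup V] [Module K V]
    (q : QuadraticForm K V) {n : ℕ} (fb : Fin n → V) (H : Submodule K V) :
    Set (CliffordAlgebra q) :=
  {ω | (∃ a : CliffordAlgebra q, ω = a * ((List.ofFn fb).map (ι q)).prod) ∧
    ∀ v ∈ H, ι q v * ω = 0}


lemma recover_aux {K V : Type*} [Field K] [AddCommGroup V] [Module K V]
    (q : QuadraticForm K V) (H : Submodule K V) (hH : IsMaxIsotropic q H)
    (ω : CliffordAlgebra q) (hω0 : ω ≠ 0)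
    (hann : ∀ v ∈ H, ι q v * ω = 0) :
    ∀ v : V, v ∈ H ↔ ι q v * ω = 0 := by
  have smul0 : ∀ c : K, c • ω = 0 → c = 0 := by
    intro c hc
    rcases smul_eq_zero.mp hc with h | h
    · exact h
    · exact absurd h hω0
  intro v
  refine ⟨fun hv => hann v hv, fun hv => ?_⟩
  have hqv : q v = 0 := by
    have h1 : (algebraMap K (CliffordAlgebra q)) (q v) * ω = 0 := by
      rw [← ι_sq_scalar q v, mul_assoc, hv, mul_zero]
    rw [← Algebra.smul_def] at h1
    exact smul0 _ h1
  have hpol : ∀ h ∈ H, QuadraticMap.polar q h v = 0 := by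
    intro h hh
    have h1 : (algebraMap K (CliffordAlgebra q)) (QuadraticMap.polar q h v) * ω = 0 := by
      rw [← ι_mul_ι_add_swap, add_mul, mul_assoc, hv, mul_zero, mul_assoc,
        hann h hh, mul_zero, add_zero]
    rw [← Algebra.smul_def] at h1
    exact smul0 _ h1
  have hiso : IsIsotropicSub q (H ⊔ Submodule.span K {v}) := by
    intro w hw
    rw [Submodule.mem_sup] at hw
    obtain ⟨h, hh, z, hz, rfl⟩ := hw
    rw [Submodule.mem_span_singleton] at hz
    obtain ⟨c, rfl⟩ := hz
    rw [QuadraticMap.map_add q h (c • v), QuadraticMap.map_smul, hqv,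
      QuadraticMap.polar_smul_right, hpol h hh, hH.1 h hh]
    simp
  have heq := hH.2 _ hiso le_sup_left
  rw [← heq]
  exact Submodule.mem_sup_right (Submodule.mem_span_singleton_self v)

/-- if `ω_H` spans the one-dimensional space `S_H`, then
`H = {v ∈ V : v·ω_H = 0}`; in particular the spinor embedding `H ↦ [ω_H]` is
injective on maximal isotropic subspaces. -/
theorem stmt4 {K V : Type*} [Field K] [IsAlgClosed K] [CharZero K]
    [AddCommGroup V] [Module K V] [FiniteDimensional K V]
    (q : QuadraticForm K V) (n : ℕ)
    (hdim : Module.finrank K V = 2 * n)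
    (hq : (QuadraticMap.polarBilin q).Nondegenerate)
    (F : Submodule K V) (hF : IsMaxIsotropic q F)
    (fb : Fin n → V) (hfb : LinearIndependent K fb)
    (hfbF : Submodule.span K (Set.range fb) = F)
    (H : Submodule K V) (hH : IsMaxIsotropic q H)
    (ωH : CliffordAlgebra q) (hωH : ωH ∈ spinorSet q fb H) (hωH0 : ωH ≠ 0) :
    -- the maximal isotropic subspace is recovered from its spinor line …
    (∀ v : V, v ∈ H ↔ ι q v * ωH = 0) ∧
    -- … and in particular `H ↦ S_H` (i.e. `H ↦ [ω_H]`) is injective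
    (∀ H' : Submodule K V, IsMaxIsotropic q H' →
      spinorSet q fb H = spinorSet q fb H' → H = H') := by
  obtain ⟨hprod, hann⟩ := hωH
  have key := recover_aux q H hH ωH hωH0 hann
  refine ⟨key, fun H' hH' hs => ?_⟩
  have hωH' : ωH ∈ spinorSet q fb H' := hs ▸ ⟨hprod, hann⟩
  have key' := recover_aux q H' hH' ωH hωH0 hωH'.2
  ext v
  rw [key v, key' v]
end

section
/- Let e₁,…,e_n,f₁,…,f_n be a hyperbolic basis of (V,q) (i.e. (eᵢ|e_j)=(fᵢ|f_j)=0, (eᵢ|f_j)=δᵢⱼ), E the span of the eᵢ, and identify the spin representation Cl(V)f with ⋀E via ω ↦ ωf. Then under this identification, the action of v ∈ E ⊆ Cl(V) on ⋀E is the outer product o(v), and the action of v ∈ F ⊆ Cl(V) is twice the inner product 2ι(v). -/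
/-!
On `E` the claim is just associativity of `Cl(V)`. For `w ∈ F`, total isotropy of `F` makes
`w` anticommute with every `fᵢ` and square to `0`, so `w · f₁⋯f_n = 0`; moving `w` to the
right through `g₁⋯g_k` with `w gⱼ = 2(w|gⱼ) − gⱼ w` therefore leaves only the contraction
terms `(−1)^{j-1} 2(w|gⱼ) g₁⋯ĝⱼ⋯g_k f`.
-/

open CliffordAlgebra

section HalfPolar

variable {K V : Type*} [Field K] [CharZero K] [AddCommGroup V] [Module K V]
  (q : QuadraticForm K V)

lemma two_mul_halfPolar (v w : V) : 2 * halfPolar q v w = QuadraticMap.polar q v w := by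
  simp [halfPolar]

lemma halfPolar_eq_zero_iff_isOrtho {v w : V} : halfPolar q v w = 0 ↔ q.IsOrtho v w := by
  rw [← QuadraticMap.isOrtho_polarBilin, QuadraticMap.polarBilin_apply_apply,
    ← two_mul_halfPolar, mul_eq_zero, or_iff_right two_ne_zero]

end HalfPolar

lemma QuadraticMap.IsOrtho.apply_self_eq_zero {R M : Type*} [CommRing R] [NoZeroDivisors R]
    [CharZero R] [AddCommGroup M] [Module R M] {Q : QuadraticForm R M} {x : M}
    (h : Q.IsOrtho x x) : Q x = 0 := by
  have h2 := QuadraticMap.polar_self Q x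
  rw [h.polar_eq_zero, two_smul] at h2
  exact add_self_eq_zero.mp h2.symm

namespace CliffordAlgebra

variable {R M : Type*} [CommRing R] [AddCommGroup M] [Module R M] {Q : QuadraticForm R M}

theorem ι_mul_prod_map_ι_eq_zero_of_mem {w : M} {l : List M} (hw : w ∈ l) (hq : Q w = 0)
    (hl : ∀ x ∈ l, Q.IsOrtho w x) : ι Q w * (l.map (ι Q)).prod = 0 := by
  induction l with
  | nil => simp at hw
  | cons a t ih =>
    rw [List.map_cons, List.prod_cons]
    rcases List.mem_cons.mp hw with rfl | hwt
    · rw [← mul_assoc, ι_sq_scalar, hq, map_zero, zero_mul]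
    · rw [ι_mul_ι_mul_of_isOrtho _ (hl a List.mem_cons_self),
        ih hwt fun x hx => hl x (List.mem_cons_of_mem a hx), mul_zero, neg_zero]

theorem ι_mul_prod_map_ι_eq_zero_of_mem_span [NoZeroDivisors R] [CharZero R] {l : List M}
    (hl : ∀ x ∈ l, ∀ y ∈ l, Q.IsOrtho x y) {w : M} (hw : w ∈ Submodule.span R {x | x ∈ l}) :
    ι Q w * (l.map (ι Q)).prod = 0 := by
  suffices Submodule.span R {x | x ∈ l} ≤ LinearMap.ker
      ((LinearMap.mulRight R (l.map (ι Q)).prod).comp (ι Q)) from this hw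
  rw [Submodule.span_le]
  intro x hx
  exact ι_mul_prod_map_ι_eq_zero_of_mem hx (hl x hx x hx).apply_self_eq_zero (hl x hx)

theorem ι_mul_prod_map_ι_mul_of_ι_mul_eq_zero {w : M} {P : CliffordAlgebra Q}
    (hw : ι Q w * P = 0) {k : ℕ} (g : Fin k → M) :
    ι Q w * (((List.ofFn g).map (ι Q)).prod * P)
      = ∑ j : Fin k, ((-1 : R) ^ (j : ℕ) * QuadraticMap.polar Q w (g j)) •
          ((((List.ofFn g).eraseIdx (j : ℕ)).map (ι Q)).prod * P) := by
  induction k with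
  | zero => simp [hw]
  | succ m ih =>
    rw [List.ofFn_succ, Fin.sum_univ_succ]
    simp only [List.map_cons, List.prod_cons, Fin.val_zero, Fin.val_succ,
      List.eraseIdx_cons_zero, List.eraseIdx_cons_succ, pow_zero, one_mul]
    rw [mul_assoc (ι Q (g 0)), ← mul_assoc (ι Q w), ι_mul_ι_comm, sub_mul, mul_assoc,
      ih (fun i => g i.succ), ← Algebra.smul_def, Finset.mul_sum, sub_eq_add_neg,
      ← Finset.sum_neg_distrib]
    congr 1
    refine Finset.sum_congr rfl fun j _ => ?_
    rw [mul_smul_comm, ← neg_smul, ← mul_assoc, pow_succ]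
    congr 1
    ring

end CliffordAlgebra

theorem stmt5_general {K V : Type*} [Field K] [CharZero K]
    [AddCommGroup V] [Module K V]
    (q : QuadraticForm K V) (n : ℕ)
    (e f : Fin n → V)
    (hff : ∀ i j, halfPolar q (f i) (f j) = 0) :
    -- the action of `v ∈ E` is the outer product `o(v)`
    (∀ v ∈ Submodule.span K (Set.range e), ∀ x : CliffordAlgebra q,
      ι q v * (x * ((List.ofFn f).map (ι q)).prod)
        = (ι q v * x) * ((List.ofFn f).map (ι q)).prod) ∧
    -- the action of `w ∈ F` is twice the inner product `2ι(w)`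
    (∀ w ∈ Submodule.span K (Set.range f), ∀ (k : ℕ) (g : Fin k → V),
      (∀ j, g j ∈ Submodule.span K (Set.range e)) →
      ι q w * (((List.ofFn g).map (ι q)).prod * ((List.ofFn f).map (ι q)).prod)
        = ∑ j : Fin k, ((-1 : K) ^ (j : ℕ) * (2 * halfPolar q w (g j))) •
            ((((List.ofFn g).eraseIdx (j : ℕ)).map (ι q)).prod
              * ((List.ofFn f).map (ι q)).prod)) := by
  have hF : ∀ x ∈ List.ofFn f, ∀ y ∈ List.ofFn f, q.IsOrtho x y := by
    simp only [List.mem_ofFn', Set.forall_mem_range]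
    exact fun i j => (halfPolar_eq_zero_iff_isOrtho q).mp (hff i j)
  refine ⟨fun v _ x => (mul_assoc _ _ _).symm, fun w hw k g _ => ?_⟩
  have hwf : ι q w * ((List.ofFn f).map (ι q)).prod = 0 :=
    ι_mul_prod_map_ι_eq_zero_of_mem_span hF <| by
      simpa only [List.mem_ofFn', Set.ofPred_mem_eq] using hw
  simp only [ι_mul_prod_map_ι_mul_of_ι_mul_eq_zero hwf, two_mul_halfPolar]

/-- let `e₁,…,e_n,f₁,…,f_n` be a hyperbolic basis of `(V,q)`, `E` the span
of the `eᵢ`, and identify the spin representation `Cl(V)f` with `⋀E` via `ω ↦ ωf`.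
Under this identification the action of `v ∈ E ⊆ Cl(V)` is the outer product `o(v)`,
and the action of `w ∈ F ⊆ Cl(V)` is twice the inner product `2ι(w)`:  on a wedge
`g₁∧⋯∧g_k` of vectors of `E`,
`w · (g₁⋯g_k f) = Σⱼ (−1)^{j-1} 2(w|gⱼ) (g₁⋯ĝⱼ⋯g_k) f`. -/
theorem stmt5 {K V : Type*} [Field K] [IsAlgClosed K] [CharZero K]
    [AddCommGroup V] [Module K V] [FiniteDimensional K V]
    (q : QuadraticForm K V) (n : ℕ)
    (hdim : Module.finrank K V = 2 * n)
    (e f : Fin n → V)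
    (hee : ∀ i j, halfPolar q (e i) (e j) = 0)
    (hff : ∀ i j, halfPolar q (f i) (f j) = 0)
    (hef : ∀ i j, halfPolar q (e i) (f j) = if i = j then 1 else 0) :
    -- the action of `v ∈ E` is the outer product `o(v)`
    (∀ v ∈ Submodule.span K (Set.range e), ∀ x : CliffordAlgebra q,
      ι q v * (x * ((List.ofFn f).map (ι q)).prod)
        = (ι q v * x) * ((List.ofFn f).map (ι q)).prod) ∧
    -- the action of `w ∈ F` is twice the inner product `2ι(w)`
    (∀ w ∈ Submodule.span K (Set.range f), ∀ (k : ℕ) (g : Fin k → V),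
      (∀ j, g j ∈ Submodule.span K (Set.range e)) →
      ι q w * (((List.ofFn g).map (ι q)).prod * ((List.ofFn f).map (ι q)).prod)
        = ∑ j : Fin k, ((-1 : K) ^ (j : ℕ) * (2 * halfPolar q w (g j))) •
            ((((List.ofFn g).eraseIdx (j : ℕ)).map (ι q)).prod
              * ((List.ofFn f).map (ι q)).prod)) :=
  stmt5_general q n e f hff
end

section
/- Contraction is a module homomorphism: let e ∈ V be isotropic with e ∉ F, and let π_e: Cl(V)f → Cl(V_e)f̄ be the contraction map, defined on Cl⁺(V)f by af ↦ image of ½((−1)^{n−1}eaf + afe) in Cl(V_e)f̄ (and with sign (−1)ⁿ on Cl⁻(V)f). Then π_e is a homomorphism of Cl(e^⊥)-representations: for all v ∈ e^⊥ and a ∈ Cl(V), π_e(v·af) = v̄·π_e(af). -/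
/-!
Write `g = f_{n+1}`, so `f = f̄ g`, `(e|g) = 1` and `g² = 0`. Since `e` anticommutes with
`e^⊥`, part (ii) is a sign computation. For part (i), every vector is `w + c g` with
`w ∈ e^⊥`, and `g w = -w g + 2(g|w)`, so right multiplication shows
`Cl(V) = Cl(e^⊥) + Cl(e^⊥) g`; averaging with the main involution lets the first summand
have the parity of `a`. The second summand dies against `f`, as `g f̄ g = ± f̄ g² = 0`, so
`a f = x f̄ g` with `x ∈ Cl(e^⊥)` homogeneous. Then `e x f̄ = ± x f̄ e`, the signs cancel,
and the defining expression collapses to `½ x f̄ (e g + g e) = x f̄`.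
-/

open CliffordAlgebra

namespace CliffordAlgebra

variable {K V : Type*} [Field K] [AddCommGroup V] [Module K V] {q : QuadraticForm K V}

/-- The image of `Cl(u^⊥)` in `Cl(V)`. -/
def orthogonalSubalgebra (q : QuadraticForm K V) (u : V) : Subalgebra K (CliffordAlgebra q) :=
  Algebra.adjoin K (ι q '' {w | QuadraticMap.polar q u w = 0})

theorem ι_mul_ι_of_polar_eq_zero {u w : V} (h : QuadraticMap.polar q u w = 0) :
    ι q u * ι q w = -(ι q w * ι q u) :=
  ι_mul_ι_comm_of_isOrtho (QuadraticMap.isOrtho_polarBilin.mp h)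

theorem ι_mem_orthogonalSubalgebra {u w : V} (h : QuadraticMap.polar q u w = 0) :
    ι q w ∈ orthogonalSubalgebra q u :=
  Algebra.subset_adjoin ⟨w, h, rfl⟩

theorem list_prod_map_ι_mem_orthogonalSubalgebra {u : V} {l : List V}
    (hl : ∀ w ∈ l, QuadraticMap.polar q u w = 0) :
    (l.map (ι q)).prod ∈ orthogonalSubalgebra q u :=
  Subalgebra.list_prod_mem _ fun _ hx ↦ by
    obtain ⟨w, hw, rfl⟩ := List.mem_map.mp hx
    exact ι_mem_orthogonalSubalgebra (hl w hw)

theorem involute_mem_orthogonalSubalgebra {u : V} {z : CliffordAlgebra q}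
    (hz : z ∈ orthogonalSubalgebra q u) : involute z ∈ orthogonalSubalgebra q u := by
  induction hz using Algebra.adjoin_induction with
  | mem x hx =>
    obtain ⟨w, hw, rfl⟩ := hx
    rw [involute_ι]
    exact neg_mem (ι_mem_orthogonalSubalgebra hw)
  | algebraMap r => rw [involute.commutes]; exact algebraMap_mem _ r
  | add x y _ _ hx hy => rw [map_add]; exact add_mem hx hy
  | mul x y _ _ hx hy => rw [map_mul]; exact mul_mem hx hy

theorem ι_mul_eq_involute_mul_ι {u : V} {z : CliffordAlgebra q}
    (hz : z ∈ orthogonalSubalgebra q u) : ι q u * z = involute z * ι q u := by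
  induction hz using Algebra.adjoin_induction with
  | mem x hx =>
    obtain ⟨w, hw, rfl⟩ := hx
    rw [involute_ι, ι_mul_ι_of_polar_eq_zero hw, neg_mul]
  | algebraMap r => rw [involute.commutes, Algebra.commutes]
  | add x y _ _ hx hy => rw [map_add, mul_add, add_mul, hx, hy]
  | mul x y _ _ hx hy => rw [map_mul, ← mul_assoc, hx, mul_assoc, hy, mul_assoc]

theorem exists_eq_add_mul_ι {u g : V} (hg : q g = 0) (hug : QuadraticMap.polar q u g ≠ 0)
    (a : CliffordAlgebra q) :
    ∃ x ∈ orthogonalSubalgebra q u, ∃ y ∈ orthogonalSubalgebra q u, a = x + y * ι q g := by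
  induction a using right_induction with
  | algebraMap r => exact ⟨algebraMap K _ r, algebraMap_mem _ r, 0, zero_mem _, by simp⟩
  | add a b ha hb =>
    obtain ⟨x, hx, y, hy, rfl⟩ := ha
    obtain ⟨x', hx', y', hy', rfl⟩ := hb
    exact ⟨x + x', add_mem hx hx', y + y', add_mem hy hy', by rw [add_mul]; abel⟩
  | mul_ι m a ha =>
    obtain ⟨x, hx, y, hy, rfl⟩ := ha
    set c := QuadraticMap.polar q u m / QuadraticMap.polar q u g
    set w := m - c • g
    have hw : QuadraticMap.polar q u w = 0 := by
      simp only [w, c, QuadraticMap.polar_sub_right, QuadraticMap.polar_smul_right, smul_eq_mul,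
        div_mul_cancel₀ _ hug, sub_self]
    have hm : ι q m = ι q w + c • ι q g := by simp [w]
    have hgw : ι q g * ι q w = algebraMap K _ (QuadraticMap.polar q g w) - ι q w * ι q g := by
      rw [← ι_mul_ι_add_swap, add_sub_cancel_right]
    have hgg : ι q g * ι q g = 0 := by rw [ι_sq_scalar, hg, map_zero]
    refine ⟨x * ι q w + QuadraticMap.polar q g w • y,
      add_mem (mul_mem hx (ι_mem_orthogonalSubalgebra hw)) (Subalgebra.smul_mem _ hy _),
      c • x - y * ι q w, sub_mem (Subalgebra.smul_mem _ hx _)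
        (mul_mem hy (ι_mem_orthogonalSubalgebra hw)), ?_⟩
    calc (x + y * ι q g) * ι q m
        = x * ι q w + c • (x * ι q g) + y * (ι q g * ι q w)
            + c • (y * (ι q g * ι q g)) := by
          simp only [hm, add_mul, mul_add, mul_smul_comm, mul_assoc, smul_add]; abel
      _ = _ := by
          rw [hgw, hgg, mul_sub, ← Algebra.commutes, ← Algebra.smul_def]
          simp only [mul_zero, smul_zero, add_zero, sub_mul, smul_mul_assoc, mul_assoc]
          abel

theorem exists_eq_add_mul_ι_of_involute_eq [NeZero (2 : K)] {u g : V} (hg : q g = 0)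
    (hug : QuadraticMap.polar q u g ≠ 0) {ε : K} (hε : ε * ε = 1) {a : CliffordAlgebra q}
    (ha : involute a = ε • a) :
    ∃ x ∈ orthogonalSubalgebra q u, involute x = ε • x ∧
      ∃ y ∈ orthogonalSubalgebra q u, a = x + y * ι q g := by
  obtain ⟨x, hx, y, hy, rfl⟩ := exists_eq_add_mul_ι hg hug a
  refine ⟨(2⁻¹ : K) • (x + ε • involute x), Subalgebra.smul_mem _
      (add_mem hx (Subalgebra.smul_mem _ (involute_mem_orthogonalSubalgebra hx) _)) _, ?_,
    (2⁻¹ : K) • (y - ε • involute y), Subalgebra.smul_mem _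
      (sub_mem hy (Subalgebra.smul_mem _ (involute_mem_orthogonalSubalgebra hy) _)) _, ?_⟩
  · simp only [map_smul, map_add, involute_involute, smul_add, smul_smul]
    rw [mul_left_comm, hε, mul_one, mul_comm ε, add_comm]
  · have h2 : (2⁻¹ : K) * 2 = 1 := inv_mul_cancel₀ two_ne_zero
    calc x + y * ι q g
        = (2⁻¹ : K) • ((x + y * ι q g) + ε • (involute (x + y * ι q g))) := by
          rw [ha, smul_smul, hε, one_smul, ← two_smul K, smul_smul, h2, one_smul]
      _ = _ := by
          simp only [map_add, map_mul, involute_ι, smul_add, sub_mul, smul_mul_assoc, mul_neg,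
            smul_sub, smul_neg]
          abel

theorem add_mul_ι_mul_mul_ι {g : V} (hg : q g = 0) {p : CliffordAlgebra q}
    (hp : p ∈ orthogonalSubalgebra q g) (x y : CliffordAlgebra q) :
    (x + y * ι q g) * (p * ι q g) = x * p * ι q g := by
  rw [add_mul, mul_assoc y, ← mul_assoc (ι q g), ι_mul_eq_involute_mul_ι hp, mul_assoc,
    ι_sq_scalar, hg, map_zero, mul_zero, mul_zero, add_zero, mul_assoc]

theorem half_smul_add_eq_self [NeZero (2 : K)] {u g : V} (hug : QuadraticMap.polar q u g = 2)
    {t : K} (ht : t * t = 1) {z : CliffordAlgebra q} (hz : ι q u * z = t • (z * ι q u)) :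
    (2⁻¹ : K) • (t • (ι q u * (z * ι q g)) + z * ι q g * ι q u) = z := by
  rw [← mul_assoc, hz, smul_mul_assoc, smul_smul, ht, one_smul, mul_assoc, mul_assoc, ← mul_add,
    ι_mul_ι_add_swap, hug, ← Algebra.commutes, ← Algebra.smul_def, smul_smul,
    inv_mul_cancel₀ two_ne_zero, one_smul]

theorem smul_ι_mul_ι_mul_add {u v : V} (hv : QuadraticMap.polar q u v = 0) (s : K)
    (b : CliffordAlgebra q) :
    s • (ι q u * (ι q v * b)) + ι q v * b * ι q u
      = ι q v * ((-s) • (ι q u * b) + b * ι q u) := by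
  rw [← mul_assoc, ι_mul_ι_of_polar_eq_zero hv]
  simp only [neg_mul, smul_neg, mul_add, mul_neg, mul_smul_comm, mul_assoc, neg_smul]

theorem exists_contraction_eq_mul_prod [NeZero (2 : K)] {e g : V} {l : List V} (hg : q g = 0)
    (heg : QuadraticMap.polar q e g = 2)
    (hl : ∀ w ∈ l, QuadraticMap.polar q e w = 0 ∧ QuadraticMap.polar q g w = 0)
    {ε : K} (hε : ε * ε = 1) {a : CliffordAlgebra q} (ha : involute a = ε • a) :
    ∃ x ∈ orthogonalSubalgebra q e,
      (2⁻¹ : K) • ((ε * (-1) ^ l.length) • (ι q e * (a * ((l.map (ι q)).prod * ι q g)))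
        + a * ((l.map (ι q)).prod * ι q g) * ι q e) = x * (l.map (ι q)).prod := by
  have hpe := list_prod_map_ι_mem_orthogonalSubalgebra fun w hw ↦ (hl w hw).1
  have hpg := list_prod_map_ι_mem_orthogonalSubalgebra fun w hw ↦ (hl w hw).2
  obtain ⟨x, hx, hxε, y, -, rfl⟩ :=
    exists_eq_add_mul_ι_of_involute_eq hg (heg ▸ two_ne_zero) hε ha
  refine ⟨x, hx, ?_⟩
  rw [add_mul_ι_mul_mul_ι hg hpg]
  refine half_smul_add_eq_self heg ?_ ?_
  · rw [mul_mul_mul_comm, hε, ← mul_pow, neg_one_mul, neg_neg, one_pow, one_mul]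
  · rw [ι_mul_eq_involute_mul_ι (mul_mem hx hpe), map_mul, hxε, involute_prod_map_ι,
      smul_mul_smul_comm, smul_mul_assoc]

end CliffordAlgebra

theorem stmt8_general {K V : Type*} [Field K] [CharZero K]
    [AddCommGroup V] [Module K V]
    (q : QuadraticForm K V) (n : ℕ)
    (f : Fin (n + 1) → V)
    (hff : ∀ i j, halfPolar q (f i) (f j) = 0)
    (e : V)
    (hef : ∀ i, halfPolar q e (f i) = if i = Fin.last n then 1 else 0) :
    -- (ii) Cl(e^⊥)-equivariance of the contraction, at the level of representatives
    (∀ v : V, QuadraticMap.polar q e v = 0 → ∀ a : CliffordAlgebra q,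
      (2⁻¹ : K) • (((-1 : K) ^ n) •
            (ι q e * ((ι q v * a) * ((List.ofFn f).map (ι q)).prod))
          + (ι q v * a) * ((List.ofFn f).map (ι q)).prod * ι q e)
        = ι q v * ((2⁻¹ : K) • (((-1 : K) ^ (n + 1)) •
            (ι q e * (a * ((List.ofFn f).map (ι q)).prod))
          + a * ((List.ofFn f).map (ι q)).prod * ι q e))) ∧
    -- (i) the defining expression of π_e lies in Cl(e^⊥)·f₁⋯f_n,
    -- for the even half-spin representation …
    (∀ a ∈ evenOdd q 0,
      ∃ x ∈ Algebra.adjoin K (ι q '' {w : V | QuadraticMap.polar q e w = 0}),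
        (2⁻¹ : K) • (((-1 : K) ^ n) •
              (ι q e * (a * ((List.ofFn f).map (ι q)).prod))
            + a * ((List.ofFn f).map (ι q)).prod * ι q e)
          = x * ((List.ofFn (fun i : Fin n => f i.castSucc)).map (ι q)).prod) ∧
    -- … and for the odd one
    (∀ a ∈ evenOdd q 1,
      ∃ x ∈ Algebra.adjoin K (ι q '' {w : V | QuadraticMap.polar q e w = 0}),
        (2⁻¹ : K) • (((-1 : K) ^ (n + 1)) •
              (ι q e * (a * ((List.ofFn f).map (ι q)).prod))
            + a * ((List.ofFn f).map (ι q)).prod * ι q e)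
          = x * ((List.ofFn (fun i : Fin n => f i.castSucc)).map (ι q)).prod) := by
  have hpolar (u w : V) : QuadraticMap.polar q u w = 2 * halfPolar q u w := by simp [halfPolar]
  set l := List.ofFn fun i : Fin n => f i.castSucc
  have hprod : ((List.ofFn f).map (ι q)).prod = (l.map (ι q)).prod * ι q (f (Fin.last n)) := by
    rw [List.ofFn_succ', List.map_concat, List.prod_concat]
  have hg : q (f (Fin.last n)) = 0 := by
    simpa [QuadraticMap.polar_self, hff] using hpolar (f (Fin.last n)) (f (Fin.last n))
  have heg : QuadraticMap.polar q e (f (Fin.last n)) = 2 := by rw [hpolar, hef, if_pos rfl, mul_one]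
  have hl : ∀ w ∈ l,
      QuadraticMap.polar q e w = 0 ∧ QuadraticMap.polar q (f (Fin.last n)) w = 0 := by
    simp [l, List.mem_ofFn, hpolar, hef, hff, Fin.castSucc_ne_last]
  refine ⟨fun v hv a ↦ ?_, fun a ha ↦ ?_, fun a ha ↦ ?_⟩
  · rw [mul_smul_comm, pow_succ, mul_neg_one, ← smul_ι_mul_ι_mul_add hv]
    simp only [mul_assoc]
  · obtain ⟨x, hx, h⟩ := exists_contraction_eq_mul_prod hg heg hl (ε := 1) (by norm_num)
      (by rw [involute_eq_of_mem_even ha, one_smul])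
    rw [List.length_ofFn, one_mul] at h
    exact ⟨x, hx, hprod ▸ h⟩
  · obtain ⟨x, hx, h⟩ := exists_contraction_eq_mul_prod hg heg hl (ε := -1) (by norm_num)
      (by rw [involute_eq_of_mem_odd ha, neg_one_smul])
    rw [List.length_ofFn, ← pow_succ'] at h
    exact ⟨x, hx, hprod ▸ h⟩

/-- contraction is a module homomorphism.  Let `dim V = 2(n+1)`,
`F` maximal isotropic with basis `f₁,…,f_{n+1}` chosen so that `(e|fᵢ) = δ_{i,n+1}`
for an isotropic vector `e ∉ F`, and set `f = f₁⋯f_{n+1}`, `f̄ = f₁⋯f_n`.  The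
contraction `π_e : Cl(V)f → Cl(V_e)f̄` is defined on `Cl⁺(V)f` by
`af ↦` (image in `Cl(V_e)f̄` of) `½((−1)^n e a f + a f e)` and on `Cl⁻(V)f` with sign
`(−1)^{n+1}`.  Then: (i) this expression indeed lies in `Cl(e^⊥)·f₁⋯f_n`, and
(ii) `π_e` is a homomorphism of `Cl(e^⊥)`-representations, i.e.
`π_e(v·(af)) = v̄·π_e(af)` for `v ∈ e^⊥`; at the level of representatives this is the
identity `½((−1)^n e(va)f + (va)fe) = v·½((−1)^{n+1} e a f + a f e)`. -/
theorem stmt8 {K V : Type*} [Field K] [IsAlgClosed K] [CharZero K]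
    [AddCommGroup V] [Module K V] [FiniteDimensional K V]
    (q : QuadraticForm K V) (n : ℕ)
    (hdim : Module.finrank K V = 2 * (n + 1))
    (hq : (QuadraticMap.polarBilin q).Nondegenerate)
    (f : Fin (n + 1) → V) (hf : LinearIndependent K f)
    (hff : ∀ i j, halfPolar q (f i) (f j) = 0)
    (e : V) (hqe : q e = 0)
    (hef : ∀ i, halfPolar q e (f i) = if i = Fin.last n then 1 else 0) :
    -- (ii) Cl(e^⊥)-equivariance of the contraction, at the level of representatives
    (∀ v : V, QuadraticMap.polar q e v = 0 → ∀ a : CliffordAlgebra q,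
      (2⁻¹ : K) • (((-1 : K) ^ n) •
            (ι q e * ((ι q v * a) * ((List.ofFn f).map (ι q)).prod))
          + (ι q v * a) * ((List.ofFn f).map (ι q)).prod * ι q e)
        = ι q v * ((2⁻¹ : K) • (((-1 : K) ^ (n + 1)) •
            (ι q e * (a * ((List.ofFn f).map (ι q)).prod))
          + a * ((List.ofFn f).map (ι q)).prod * ι q e))) ∧
    -- (i) the defining expression of π_e lies in Cl(e^⊥)·f₁⋯f_n,
    -- for the even half-spin representation …
    (∀ a ∈ evenOdd q 0,
      ∃ x ∈ Algebra.adjoin K (ι q '' {w : V | QuadraticMap.polar q e w = 0}),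
        (2⁻¹ : K) • (((-1 : K) ^ n) •
              (ι q e * (a * ((List.ofFn f).map (ι q)).prod))
            + a * ((List.ofFn f).map (ι q)).prod * ι q e)
          = x * ((List.ofFn (fun i : Fin n => f i.castSucc)).map (ι q)).prod) ∧
    -- … and for the odd one
    (∀ a ∈ evenOdd q 1,
      ∃ x ∈ Algebra.adjoin K (ι q '' {w : V | QuadraticMap.polar q e w = 0}),
        (2⁻¹ : K) • (((-1 : K) ^ (n + 1)) •
              (ι q e * (a * ((List.ofFn f).map (ι q)).prod))
            + a * ((List.ofFn f).map (ι q)).prod * ι q e)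
          = x * ((List.ofFn (fun i : Fin n => f i.castSucc)).map (ι q)).prod) :=
  stmt8_general q n f hff e hef
end

section
/- The composite π_e ∘ τ_h is the identity on Cl(V_e)f̄, where π_e is contraction with the isotropic vector e and τ_h is multiplication with h, for a hyperbolic pair (e,h) with h ∈ F. -/
/-!
Write `f = f̄ h` with `f̄ = f₁ ⋯ f_n`. The vector `e` is orthogonal to `f₁, …, f_n` and to
`⟨e, h⟩^⊥`, hence anticommutes with them, so `e (a f̄) = c (a f̄) e` where `c = ±(-1)^n` is exactly
the sign in `π_e`. Therefore `c e (a f̄ h) + (a f̄ h) e = a f̄ (e h + h e) = 2 a f̄`, as `(e|h) = 1`.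
-/

open CliffordAlgebra

section HalfPolar

variable {K V : Type*} [Field K] [CharZero K] [AddCommGroup V] [Module K V]
  {q : QuadraticForm K V} {v w : V}

theorem halfPolar_apply : halfPolar q v w = 2⁻¹ * QuadraticMap.polar q v w := rfl

theorem isOrtho_of_halfPolar_eq_zero (h : halfPolar q v w = 0) : q.IsOrtho v w :=
  QuadraticMap.isOrtho_polarBilin.mp <| by simpa [halfPolar_apply] using h

theorem polar_eq_two_of_halfPolar_eq_one (h : halfPolar q v w = 1) :
    QuadraticMap.polar q v w = 2 := by
  rw [halfPolar_apply] at h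
  field_simp at h
  exact h

end HalfPolar

section TwistedCommute

variable {K A : Type*} [Field K] [Ring A] [Algebra K A]

theorem mul_mul_eq_smul_mul_mul {ε x y : A} {σ τ : K} (hx : ε * x = σ • (x * ε))
    (hy : ε * y = τ • (y * ε)) : ε * (x * y) = (σ * τ) • (x * y * ε) := by
  rw [← mul_assoc, hx, smul_mul_assoc, mul_assoc, hy, mul_smul_comm, smul_smul, mul_assoc]

theorem half_smul_contraction [NeZero (2 : K)] {ε x h : A} {c : K} (hc : c * c = 1)
    (hx : ε * x = c • (x * ε)) (hεh : ε * h + h * ε = 2) :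
    (2⁻¹ : K) • (c • (ε * (x * h)) + x * h * ε) = x := by
  have hε : ε * (x * h) = c • (x * (2 - h * ε)) := by
    rw [← mul_assoc, hx, smul_mul_assoc, mul_assoc, ← hεh, add_sub_cancel_right]
  rw [hε, smul_smul, hc, one_smul, mul_sub, mul_assoc, sub_add_cancel, mul_two, ← two_smul K,
    smul_smul, inv_mul_cancel₀ two_ne_zero, one_smul]

end TwistedCommute

section CliffordAlgebra

variable {R M : Type*} [CommRing R] [AddCommGroup M] [Module R M] {Q : QuadraticForm R M}

theorem ι_mul_prod_map_ι_of_isOrtho {v : M} {l : List M} (h : ∀ w ∈ l, Q.IsOrtho v w) :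
    ι Q v * (l.map (ι Q)).prod = ((-1 : R) ^ l.length) • ((l.map (ι Q)).prod * ι Q v) := by
  induction l with
  | nil => simp
  | cons w t ih =>
    rw [List.map_cons, List.prod_cons, ← mul_assoc,
      ι_mul_ι_comm_of_isOrtho (h w List.mem_cons_self), neg_mul, mul_assoc,
      ih fun x hx => h x (List.mem_cons_of_mem _ hx), List.length_cons, pow_succ', mul_smul,
      neg_one_smul, mul_smul_comm, mul_assoc]

theorem ι_mul_eq_involute_mul_ι {v : M} {s : Set M} (h : ∀ w ∈ s, Q.IsOrtho v w)
    {a : CliffordAlgebra Q} (ha : a ∈ Algebra.adjoin R (ι Q '' s)) :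
    ι Q v * a = involute a * ι Q v := by
  induction ha using Algebra.adjoin_induction with
  | mem x hx =>
    obtain ⟨w, hw, rfl⟩ := hx
    rw [involute_ι, neg_mul, ι_mul_ι_comm_of_isOrtho (h w hw)]
  | algebraMap r => rw [AlgHom.commutes, Algebra.commutes]
  | add x y _ _ hx hy => rw [map_add, mul_add, add_mul, hx, hy]
  | mul x y _ _ hx hy => rw [map_mul, ← mul_assoc, hx, mul_assoc, hy, mul_assoc]

end CliffordAlgebra

theorem stmt10_general {K V : Type*} [Field K] [CharZero K]
    [AddCommGroup V] [Module K V]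
    (q : QuadraticForm K V) (n : ℕ)
    (f : Fin (n + 1) → V)
    (e : V)
    (hef : ∀ i, halfPolar q e (f i) = if i = Fin.last n then 1 else 0) :
    ∀ a ∈ Algebra.adjoin K (ι q '' {w : V | halfPolar q e w = 0 ∧
        halfPolar q (f (Fin.last n)) w = 0}),
      (a ∈ evenOdd q 0 →
        (2⁻¹ : K) • (((-1 : K) ^ n) •
              (ι q e * (a * ((List.ofFn f).map (ι q)).prod))
            + (a * ((List.ofFn f).map (ι q)).prod) * ι q e)
          = a * ((List.ofFn (fun i : Fin n => f i.castSucc)).map (ι q)).prod) ∧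
      (a ∈ evenOdd q 1 →
        (2⁻¹ : K) • (((-1 : K) ^ (n + 1)) •
              (ι q e * (a * ((List.ofFn f).map (ι q)).prod))
            + (a * ((List.ofFn f).map (ι q)).prod) * ι q e)
          = a * ((List.ofFn (fun i : Fin n => f i.castSucc)).map (ι q)).prod) := by
  intro a ha
  set fbar := (List.ofFn fun i : Fin n => f i.castSucc).map (ι q)
  have hsplit : ((List.ofFn f).map (ι q)).prod = fbar.prod * ι q (f (Fin.last n)) := by
    rw [List.ofFn_succ', List.concat_eq_append, List.map_append, List.prod_append,
      List.map_singleton, List.prod_singleton]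
  have ha_comm : ι q e * a = involute a * ι q e :=
    ι_mul_eq_involute_mul_ι (fun w hw => isOrtho_of_halfPolar_eq_zero hw.1) ha
  have hfbar : ι q e * fbar.prod = ((-1 : K) ^ n) • (fbar.prod * ι q e) := by
    have hortho : ∀ w ∈ List.ofFn fun i : Fin n => f i.castSucc, q.IsOrtho e w := by
      intro w hw
      obtain ⟨i, rfl⟩ := List.mem_ofFn.mp hw
      exact isOrtho_of_halfPolar_eq_zero <| by simp [hef, (Fin.castSucc_lt_last i).ne]
    simpa [fbar] using ι_mul_prod_map_ι_of_isOrtho hortho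
  have hpair : ι q e * ι q (f (Fin.last n)) + ι q (f (Fin.last n)) * ι q e = 2 := by
    rw [ι_mul_ι_add_swap, polar_eq_two_of_halfPolar_eq_one (by simp [hef]), map_ofNat]
  have hsign : ∀ k, (-1 : K) ^ k * (-1) ^ k = 1 := fun k => by rw [← mul_pow]; simp
  simp only [hsplit, ← mul_assoc a]
  refine ⟨fun heven => half_smul_contraction (hsign n) ?_ hpair,
    fun hodd => half_smul_contraction (hsign (n + 1)) ?_ hpair⟩
  · simpa using mul_mul_eq_smul_mul_mul (σ := (1 : K))
      (by rw [ha_comm, involute_eq_of_mem_even heven, one_smul]) hfbar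
  · simpa [pow_succ'] using mul_mul_eq_smul_mul_mul (σ := (-1 : K))
      (by rw [ha_comm, involute_eq_of_mem_odd hodd, neg_mul, neg_one_smul]) hfbar

/-- `π_e ∘ τ_h` is the identity on `Cl(V_e)f̄`, where `π_e` is contraction
with the isotropic vector `e` and `τ_h` is multiplication with `h = f_{n+1}`, for a
hyperbolic pair `(e,h)` with `h ∈ F`.  Identifying `V_e` with `⟨e,h⟩^⊥ ⊆ V` and
`Cl(V_e)f̄` with `{a·f₁⋯f_n : a ∈ Cl(⟨e,h⟩^⊥)}`, this says that for every
`a ∈ Cl(⟨e,h⟩^⊥)` the defining expression of `π_e` applied to `τ_h(a f̄) = a f` equals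
`a f̄` again: `½((−1)^n e(af) + (af)e) = a·f₁⋯f_n` for `a` even (and with sign
`(−1)^{n+1}` for `a` odd). -/
theorem stmt10 {K V : Type*} [Field K] [IsAlgClosed K] [CharZero K]
    [AddCommGroup V] [Module K V] [FiniteDimensional K V]
    (q : QuadraticForm K V) (n : ℕ)
    (hdim : Module.finrank K V = 2 * (n + 1))
    (hq : (QuadraticMap.polarBilin q).Nondegenerate)
    (f : Fin (n + 1) → V) (hf : LinearIndependent K f)
    (hff : ∀ i j, halfPolar q (f i) (f j) = 0)
    (e : V) (hqe : q e = 0)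
    (hef : ∀ i, halfPolar q e (f i) = if i = Fin.last n then 1 else 0) :
    ∀ a ∈ Algebra.adjoin K (ι q '' {w : V | halfPolar q e w = 0 ∧
        halfPolar q (f (Fin.last n)) w = 0}),
      (a ∈ evenOdd q 0 →
        (2⁻¹ : K) • (((-1 : K) ^ n) •
              (ι q e * (a * ((List.ofFn f).map (ι q)).prod))
            + (a * ((List.ofFn f).map (ι q)).prod) * ι q e)
          = a * ((List.ofFn (fun i : Fin n => f i.castSucc)).map (ι q)).prod) ∧
      (a ∈ evenOdd q 1 →
        (2⁻¹ : K) • (((-1 : K) ^ (n + 1)) •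
              (ι q e * (a * ((List.ofFn f).map (ι q)).prod))
            + (a * ((List.ofFn f).map (ι q)).prod) * ι q e)
          = a * ((List.ofFn (fun i : Fin n => f i.castSucc)).map (ι q)).prod) :=
  stmt10_general q n f e hef
end

section
/- The multiplication map identifies spinor lines: if (e,h) is a hyperbolic pair with h ∈ F and H' ⊆ V_e is maximal isotropic, then τ_h(S_{H'}) = S_{H' ⊕ ⟨h⟩}, where H' ⊕ ⟨h⟩ is a maximal isotropic subspace of V (identifying V_e with ⟨e,h⟩^⊥ ⊆ V). -/
open CliffordAlgebra

set_option maxHeartbeats 2000000 in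
/-- the multiplication map identifies spinor lines.  If `(e,h)` is a
hyperbolic pair with `h = f_{n+1} ∈ F` and `H' ⊆ V_e` is maximal isotropic, then
`τ_h(S_{H'}) = S_{H' ⊕ ⟨h⟩}`, where `H' ⊕ ⟨h⟩` is a maximal isotropic subspace of `V`.
Here `V_e` is identified with `⟨e,h⟩^⊥ ⊆ V` via an isometry `σ : (V',q') → (V,q)`, and
`τ_h(a f̄) = a f̄ f_{n+1}` is realised by `y ↦ (Cl σ)(y) · f_{n+1}`. -/
theorem stmt12 {K V V' : Type*} [Field K] [IsAlgClosed K] [CharZero K]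
    [AddCommGroup V] [Module K V] [FiniteDimensional K V]
    [AddCommGroup V'] [Module K V'] [FiniteDimensional K V']
    (q : QuadraticForm K V) (q' : QuadraticForm K V') (n : ℕ)
    (hdim : Module.finrank K V = 2 * (n + 1))
    (hdim' : Module.finrank K V' = 2 * n)
    (hq : (QuadraticMap.polarBilin q).Nondegenerate)
    (f : Fin (n + 1) → V) (hf : LinearIndependent K f)
    (hff : ∀ i j, halfPolar q (f i) (f j) = 0)
    (e : V) (hqe : q e = 0)
    (hef : ∀ i, halfPolar q e (f i) = if i = Fin.last n then 1 else 0)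
    -- σ identifies (V',q') with ⟨e,h⟩^⊥ ⊆ V, where h = f_{n+1}
    (σ : q' →qᵢ q) (hσinj : Function.Injective σ)
    (hσperp : ∀ v' : V', halfPolar q e (σ v') = 0 ∧
      halfPolar q (f (Fin.last n)) (σ v') = 0)
    (hσrange : ∀ w : V, halfPolar q e w = 0 → halfPolar q (f (Fin.last n)) w = 0 →
      w ∈ Set.range σ)
    (f' : Fin n → V') (hf' : ∀ i : Fin n, σ (f' i) = f i.castSucc)
    -- a maximal isotropic subspace H' of V_e
    (H' : Submodule K V') (hH' : IsMaxIsotropic q' H') :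
    -- H' ⊕ ⟨h⟩ is a maximal isotropic subspace of V, and τ_h(S_{H'}) = S_{H'⊕⟨h⟩}
    IsMaxIsotropic q
      (Submodule.map σ.toLinearMap H' ⊔ Submodule.span K {f (Fin.last n)}) ∧
    (fun y : CliffordAlgebra q' =>
        CliffordAlgebra.map σ y * ι q (f (Fin.last n))) ''
      {y : CliffordAlgebra q' |
        (∃ a : CliffordAlgebra q', y = a * ((List.ofFn f').map (ι q')).prod) ∧
        ∀ v ∈ H', ι q' v * y = 0}
    = {x : CliffordAlgebra q |
        (∃ a : CliffordAlgebra q, x = a * ((List.ofFn f).map (ι q)).prod) ∧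
        ∀ v ∈ (Submodule.map σ.toLinearMap H' ⊔ Submodule.span K {f (Fin.last n)}),
          ι q v * x = 0} := by
  classical
  have two_ne : (2:K) ≠ 0 := two_ne_zero
  set hl : V := f (Fin.last n) with hl_def
  set dE : V →ₗ[K] K := halfPolar q e with dE_def
  set dH : V →ₗ[K] K := halfPolar q hl with dH_def
  -- basic facts about halfPolar and polar
  have hhp : ∀ v w : V, halfPolar q v w = 2⁻¹ * QuadraticMap.polar q v w := by
    intro v w
    simp [halfPolar, QuadraticMap.polarBilin_apply_apply, smul_eq_mul]
  have hpol2 : ∀ v w : V, QuadraticMap.polar q v w = 2 * halfPolar q v w := by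
    intro v w
    rw [hhp, ← mul_assoc, mul_inv_cancel₀ two_ne, one_mul]
  have hhpC : ∀ v w : V, halfPolar q v w = halfPolar q w v := by
    intro v w; rw [hhp, hhp, QuadraticMap.polar_comm]
  have hq_of_self : ∀ v : V, halfPolar q v v = 0 → q v = 0 := by
    intro v hv
    have h2 := QuadraticMap.polar_self (Q := q) v
    rw [hpol2 v v, hv, mul_zero] at h2
    have h3 : q v + q v = 0 := by
      have := h2.symm
      rwa [two_smul] at this
    exact add_self_eq_zero.mp h3
  have hdEe : dE e = 0 := by
    rw [dE_def, hhp, QuadraticMap.polar_self, hqe]; simp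
  have hdEhl : dE hl = 1 := by
    have := hef (Fin.last n)
    rw [if_pos rfl, ← hl_def] at this
    exact this
  have hdHhl : dH hl = 0 := by
    have := hff (Fin.last n) (Fin.last n)
    rw [← hl_def, ← dH_def] at this
    exact this
  have hdHe : dH e = 1 := by
    rw [dH_def, hhpC, ← dE_def]
    exact hdEhl
  have hql : q hl = 0 := by
    apply hq_of_self
    rw [← dH_def]; exact hdHhl
  have hdEσ : ∀ u : V', dE (σ u) = 0 := fun u => (hσperp u).1
  have hdHσ : ∀ u : V', dH (σ u) = 0 := fun u => (hσperp u).2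
  have hpol_eσ : ∀ u : V', QuadraticMap.polar q e (σ u) = 0 := by
    intro u; rw [hpol2, ← dE_def, hdEσ, mul_zero]
  have hpol_σe : ∀ u : V', QuadraticMap.polar q (σ u) e = 0 := by
    intro u; rw [QuadraticMap.polar_comm]; exact hpol_eσ u
  have hpol_hlσ : ∀ u : V', QuadraticMap.polar q hl (σ u) = 0 := by
    intro u; rw [hpol2, ← dH_def, hdHσ, mul_zero]
  have hpol_σhl : ∀ u : V', QuadraticMap.polar q (σ u) hl = 0 := by
    intro u; rw [QuadraticMap.polar_comm]; exact hpol_hlσ u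
  have hpol_ehl : QuadraticMap.polar q e hl = 2 := by
    rw [hpol2, ← dE_def, hdEhl, mul_one]
  have hpol_hle : QuadraticMap.polar q hl e = 2 := by
    rw [QuadraticMap.polar_comm]; exact hpol_ehl
  have hσq : ∀ u : V', q (σ u) = q' u := fun u => σ.map_app u
  have hpolσσ : ∀ u w : V', QuadraticMap.polar q (σ u) (σ w) = QuadraticMap.polar q' u w := by
    intro u w
    simp only [QuadraticMap.polar, ← map_add, hσq]
  -- Clifford algebra basics
  have hEE : ι q e * ι q e = 0 := by rw [ι_sq_scalar, hqe, map_zero]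
  have hHH : ι q hl * ι q hl = 0 := by rw [ι_sq_scalar, hql, map_zero]
  have hHE : ι q hl * ι q e = algebraMap K _ 2 - ι q e * ι q hl := by
    rw [ι_mul_ι_comm, hpol_hle]
  have hswap : ∀ a b : V, QuadraticMap.polar q a b = 0 →
      ι q a * ι q b = -(ι q b * ι q a) := by
    intro a b hab; rw [ι_mul_ι_comm, hab, map_zero, zero_sub]
  have hσE : ∀ u : V', ι q (σ u) * ι q e = -(ι q e * ι q (σ u)) :=
    fun u => hswap _ _ (hpol_σe u)
  have hσH : ∀ u : V', ι q (σ u) * ι q hl = -(ι q hl * ι q (σ u)) :=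
    fun u => hswap _ _ (hpol_σhl u)
  have hσψ : ∀ (u : V') (z : CliffordAlgebra q'),
      ι q (σ u) * map σ z = map σ (ι q' u * z) := by
    intro u z; rw [map_mul, map_apply_ι]
  have hcomm : ∀ v : V, (∀ u : V', QuadraticMap.polar q v (σ u) = 0) →
      ∀ z : CliffordAlgebra q', ι q v * map σ z = map σ (involute z) * ι q v := by
    intro v hv z
    induction z using CliffordAlgebra.induction with
    | algebraMap r =>
      simp only [AlgHom.commutes]
      exact (Algebra.commutes r (ι q v)).symm
    | ι u =>
      rw [map_apply_ι, involute_ι, map_neg, map_apply_ι, hswap v (σ u) (hv u), neg_mul]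
    | mul a b ha hb =>
      rw [show involute (a * b) = involute a * involute b from map_mul _ _ _,
        map_mul, map_mul, ← mul_assoc, ha, mul_assoc, hb, ← mul_assoc]
    | add a b ha hb =>
      rw [map_add, mul_add, ha, hb, map_add, map_add, add_mul]
  have hcommE := hcomm e hpol_eσ
  have hcommH := hcomm hl hpol_hlσ
  have hHψH : ∀ z : CliffordAlgebra q', ι q hl * (map σ z * ι q hl) = 0 := by
    intro z; rw [← mul_assoc, hcommH z, mul_assoc, hHH, mul_zero]
  -- the projection π : V → V'
  have hσinj' : Function.Injective σ.toLinearMap := hσinj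
  let p : V →ₗ[K] V := LinearMap.id - dH.smulRight e - dE.smulRight hl
  have hp_apply : ∀ v : V, p v = v - dH v • e - dE v • hl := fun v => rfl
  have hpmem : ∀ v : V, p v ∈ LinearMap.range σ.toLinearMap := by
    intro v
    have h1 : dE (p v) = 0 := by
      rw [hp_apply]
      simp [map_sub, map_smul, hdEe, hdEhl, smul_eq_mul]
    have h2 : dH (p v) = 0 := by
      rw [hp_apply]
      simp [map_sub, map_smul, hdHe, hdHhl, smul_eq_mul]
    obtain ⟨u, hu⟩ := hσrange (p v) h1 h2
    exact ⟨u, hu⟩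
  let π : V →ₗ[K] V' :=
    (LinearEquiv.ofInjective σ.toLinearMap hσinj').symm.toLinearMap ∘ₗ
      (p.codRestrict _ hpmem)
  have hπ : ∀ v : V, σ (π v) = p v := by
    intro v
    exact LinearEquiv.ofInjective_symm_apply (f := σ.toLinearMap) (h := hσinj')
      ⟨p v, hpmem v⟩
  have hπσ : ∀ u : V', π (σ u) = u := by
    intro u
    apply hσinj
    rw [hπ, hp_apply]
    simp [hdEσ, hdHσ]
  have hπhl : π hl = 0 := by
    apply hσinj
    rw [hπ, hp_apply, map_zero]
    simp [hdEhl, hdHhl]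
  have hdecomp : ∀ v : V, v = σ (π v) + dH v • e + dE v • hl := by
    intro v
    rw [hπ, hp_apply]
    abel
  have hqv : ∀ v : V, q v = q' (π v) + 2 * (dH v * dE v) := by
    intro v
    conv_lhs => rw [hdecomp v]
    have e1 : q (σ (π v) + dH v • e) = q' (π v) := by
      rw [QuadraticMap.map_add ⇑q (σ (π v)) (dH v • e), QuadraticMap.map_smul, hqe,
        QuadraticMap.polar_smul_right, hpol_σe, hσq]
      simp
    rw [QuadraticMap.map_add ⇑q (σ (π v) + dH v • e) (dE v • hl), e1, QuadraticMap.map_smul, hql,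
      QuadraticMap.polar_smul_right, QuadraticMap.polar_add_left,
      QuadraticMap.polar_smul_left, hpol_σhl, hpol_ehl]
    simp only [smul_eq_mul, mul_zero, add_zero, zero_add]
    ring
  -- the representation of Cl(q) on Cl(q') × Cl(q')
  let B : V →ₗ[K] Module.End K (CliffordAlgebra q') :=
    (Algebra.lmul K (CliffordAlgebra q')).toLinearMap ∘ₗ (CliffordAlgebra.ι q') ∘ₗ π
  let Wfst := LinearMap.fst K (CliffordAlgebra q') (CliffordAlgebra q')
  let Wsnd := LinearMap.snd K (CliffordAlgebra q') (CliffordAlgebra q')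
  let c₀ : V →ₗ[K] (CliffordAlgebra q' × CliffordAlgebra q') →ₗ[K] CliffordAlgebra q' :=
    (LinearMap.lcomp K _ Wfst) ∘ₗ B + ((2:K) • dE).smulRight Wsnd
  let c₁ : V →ₗ[K] (CliffordAlgebra q' × CliffordAlgebra q') →ₗ[K] CliffordAlgebra q' :=
    dH.smulRight Wfst - (LinearMap.lcomp K _ Wsnd) ∘ₗ B
  let θ : V →ₗ[K] Module.End K (CliffordAlgebra q' × CliffordAlgebra q') :=
    { toFun := fun v => (c₀ v).prod (c₁ v)
      map_add' := by
        intro v w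
        apply LinearMap.ext; intro y
        simp [LinearMap.prod_apply, LinearMap.add_apply, Prod.mk_add_mk]
      map_smul' := by
        intro c v
        apply LinearMap.ext; intro y
        simp [LinearMap.prod_apply, LinearMap.smul_apply, Prod.smul_mk] }
  have θap : ∀ (v : V) (y : CliffordAlgebra q' × CliffordAlgebra q'),
      θ v y = (ι q' (π v) * y.1 + (2 * dE v) • y.2, dH v • y.1 - ι q' (π v) * y.2) := by
    intro v y
    rfl
  have hθsq : ∀ v : V, θ v * θ v = algebraMap K _ (q v) := by
    intro v
    apply LinearMap.ext; intro y
    rw [Module.End.mul_apply, θap, θap, Module.algebraMap_end_apply]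
    obtain ⟨y₀, y₁⟩ := y
    simp only
    refine Prod.ext ?_ ?_
    · simp only [hqv v, mul_add, mul_smul_comm, smul_add, smul_sub, smul_smul,
        ← mul_assoc, ι_sq_scalar, ← Algebra.smul_def, Prod.smul_mk]
      module
    · simp only [hqv v, mul_sub, mul_smul_comm, smul_add, smul_sub, smul_smul,
        ← mul_assoc, ι_sq_scalar, ← Algebra.smul_def, Prod.smul_mk]
      module
  let F : CliffordAlgebra q →ₐ[K] Module.End K (CliffordAlgebra q' × CliffordAlgebra q') :=
    CliffordAlgebra.lift q ⟨θ, hθsq⟩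
  have hFι : ∀ v : V, F (ι q v) = θ v := fun v => CliffordAlgebra.lift_ι_apply _ _ v
  have hFψ : ∀ (z : CliffordAlgebra q') (y : CliffordAlgebra q' × CliffordAlgebra q'),
      F (map σ z) y = (z * y.1, involute z * y.2) := by
    intro z
    induction z using CliffordAlgebra.induction with
    | algebraMap r =>
      intro y
      rw [AlgHom.commutes, AlgHom.commutes, Module.algebraMap_end_apply]
      rw [show involute ((algebraMap K (CliffordAlgebra q')) r) = algebraMap K _ r from
        AlgHom.commutes _ r]
      refine Prod.ext ?_ ?_ <;> simp [Algebra.smul_def]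
    | ι u =>
      intro y
      rw [map_apply_ι, hFι, θap, hπσ, involute_ι]
      simp [hdEσ u, hdHσ u, neg_mul]
    | mul a b ha hb =>
      intro y
      rw [map_mul, map_mul, Module.End.mul_apply, hb, ha]
      simp [mul_assoc]
    | add a b ha hb =>
      intro y
      rw [map_add, map_add, LinearMap.add_apply, ha, hb]
      simp [add_mul, Prod.mk_add_mk]
  have hτinj : ∀ z : CliffordAlgebra q', map σ z * ι q hl = 0 → z = 0 := by
    intro z hz
    have h0 : F (map σ z * ι q hl) ((0 : CliffordAlgebra q'), (1 : CliffordAlgebra q')) = 0 := by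
      rw [hz, map_zero]; rfl
    rw [map_mul, Module.End.mul_apply, hFι, θap] at h0
    simp only [hπhl, hdEhl, hdHhl, map_zero, zero_mul, mul_one, smul_eq_mul,
      zero_smul, mul_zero, sub_zero, zero_sub, zero_add, neg_zero] at h0
    rw [hFψ] at h0
    have h1 := congrArg Prod.fst h0
    simp only [mul_smul_comm, mul_one] at h1
    rcases smul_eq_zero.mp h1 with h | h
    · exact absurd h two_ne
    · exact h
  -- moving vectors past the subalgebra, with tails
  have hmoveE : ∀ (u : V') (z : CliffordAlgebra q),
      ι q (σ u) * (ι q e * z) = -(ι q e * (ι q (σ u) * z)) := by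
    intro u z; rw [← mul_assoc, hσE, neg_mul, mul_assoc]
  have hmoveH : ∀ (u : V') (z : CliffordAlgebra q),
      ι q (σ u) * (ι q hl * z) = -(ι q hl * (ι q (σ u) * z)) := by
    intro u z; rw [← mul_assoc, hσH, neg_mul, mul_assoc]
  have hmoveEH : ∀ z : CliffordAlgebra q,
      ι q hl * (ι q e * z) = (2:K) • z - ι q e * (ι q hl * z) := by
    intro z; rw [← mul_assoc, hHE, sub_mul, ← Algebra.smul_def, mul_assoc]
  have hEEz : ∀ z : CliffordAlgebra q, ι q e * (ι q e * z) = 0 := by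
    intro z; rw [← mul_assoc, hEE, zero_mul]
  have hHHz : ∀ z : CliffordAlgebra q, ι q hl * (ι q hl * z) = 0 := by
    intro z; rw [← mul_assoc, hHH, zero_mul]
  -- the four-component decomposition
  let X : CliffordAlgebra q' → CliffordAlgebra q' → CliffordAlgebra q' →
      CliffordAlgebra q' → CliffordAlgebra q := fun y₀ y₁ y₂ y₃ =>
    map σ y₀ + ι q e * map σ y₁ + ι q hl * map σ y₂ + ι q e * (ι q hl * map σ y₃)
  have Xadd : ∀ a₀ a₁ a₂ a₃ b₀ b₁ b₂ b₃ : CliffordAlgebra q',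
      X a₀ a₁ a₂ a₃ + X b₀ b₁ b₂ b₃ = X (a₀+b₀) (a₁+b₁) (a₂+b₂) (a₃+b₃) := by
    intro a₀ a₁ a₂ a₃ b₀ b₁ b₂ b₃
    simp only [X, map_add, mul_add]
    abel
  have Xsmul : ∀ (c : K) (a₀ a₁ a₂ a₃ : CliffordAlgebra q'),
      c • X a₀ a₁ a₂ a₃ = X (c•a₀) (c•a₁) (c•a₂) (c•a₃) := by
    intro c a₀ a₁ a₂ a₃
    simp only [X, map_smul, smul_add, mul_smul_comm]
  have g1 : ∀ (u : V') (a₀ a₁ a₂ a₃ : CliffordAlgebra q'),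
      ι q (σ u) * X a₀ a₁ a₂ a₃
        = X (ι q' u * a₀) (-(ι q' u * a₁)) (-(ι q' u * a₂)) (ι q' u * a₃) := by
    intro u a₀ a₁ a₂ a₃
    simp only [X, mul_add, hσψ, hmoveE, hmoveH, map_neg, mul_neg, neg_neg]
  have g2 : ∀ a₀ a₁ a₂ a₃ : CliffordAlgebra q',
      ι q e * X a₀ a₁ a₂ a₃ = X 0 a₀ 0 a₂ := by
    intro a₀ a₁ a₂ a₃
    simp only [X, mul_add, hEEz, map_zero, mul_zero, zero_add, add_zero]
  have g3 : ∀ a₀ a₁ a₂ a₃ : CliffordAlgebra q',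
      ι q hl * X a₀ a₁ a₂ a₃ = X ((2:K)•a₁) 0 (a₀ + (2:K)•a₃) (-a₁) := by
    intro a₀ a₁ a₂ a₃
    simp only [X, mul_add, hmoveEH, hHHz, mul_zero, map_add, map_smul, map_neg,
      mul_neg, mul_smul_comm, map_zero, add_zero, zero_add, sub_zero, smul_zero]
    abel
  have hspan : ∀ a : CliffordAlgebra q, ∃ y₀ y₁ y₂ y₃ : CliffordAlgebra q',
      a = X y₀ y₁ y₂ y₃ := by
    intro a
    induction a using CliffordAlgebra.left_induction with
    | algebraMap r =>
      refine ⟨algebraMap K _ r, 0, 0, 0, ?_⟩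
      simp [X, AlgHom.commutes]
    | add x y hx hy =>
      obtain ⟨x₀,x₁,x₂,x₃,rfl⟩ := hx
      obtain ⟨z₀,z₁,z₂,z₃,rfl⟩ := hy
      exact ⟨_, _, _, _, Xadd x₀ x₁ x₂ x₃ z₀ z₁ z₂ z₃⟩
    | ι_mul x v hx =>
      obtain ⟨x₀,x₁,x₂,x₃,rfl⟩ := hx
      have hv : ι q v = ι q (σ (π v)) + dH v • ι q e + dE v • ι q hl := by
        conv_lhs => rw [hdecomp v]
        rw [map_add, map_add, map_smul, map_smul]
      refine ⟨ι q' (π v) * x₀ + dH v • (0:CliffordAlgebra q') + dE v • ((2:K)•x₁),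
        -(ι q' (π v) * x₁) + dH v • x₀ + dE v • (0:CliffordAlgebra q'),
        -(ι q' (π v) * x₂) + dH v • (0:CliffordAlgebra q') + dE v • (x₀ + (2:K)•x₃),
        ι q' (π v) * x₃ + dH v • x₂ + dE v • (-x₁), ?_⟩
      rw [hv, add_mul, add_mul, smul_mul_assoc, smul_mul_assoc, g1, g2, g3,
        Xsmul, Xsmul, Xadd, Xadd]
  -- the product of the f's
  set P' : CliffordAlgebra q' := ((List.ofFn f').map (ι q')).prod with hP'_def
  set Pf : CliffordAlgebra q := ((List.ofFn f).map (ι q)).prod with hPf_def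
  have hP : Pf = map σ P' * ι q hl := by
    rw [hPf_def, hP'_def, List.ofFn_succ', List.map_concat, List.prod_concat, ← hl_def]
    congr 1
    rw [show (map σ) (((List.ofFn f').map (ι q')).prod)
        = (((List.ofFn f').map (ι q')).map (map σ)).prod from map_list_prod _ _]
    rw [List.map_ofFn, List.map_map, List.map_ofFn]
    refine congrArg List.prod (congrArg List.ofFn ?_)
    funext i
    simp only [Function.comp_apply, map_apply_ι, hf']
  have assoc1 : ∀ z : CliffordAlgebra q',
      map σ z * (map σ P' * ι q hl) = map σ (z * P') * ι q hl := by
    intro z; rw [← mul_assoc, ← map_mul]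
  -- the two annihilation-submodule helpers
  have hann_of : ∀ x : CliffordAlgebra q,
      (∀ u ∈ H', ι q (σ u) * x = 0) → (ι q hl * x = 0) →
      ∀ v ∈ (Submodule.map σ.toLinearMap H' ⊔ Submodule.span K {hl}), ι q v * x = 0 := by
    intro x hσx hhx v hv
    have hle : Submodule.map σ.toLinearMap H' ⊔ Submodule.span K {hl}
        ≤ LinearMap.ker ((LinearMap.mulRight K x) ∘ₗ (ι q)) := by
      refine sup_le ?_ ?_
      · rintro w ⟨u, hu, rfl⟩
        simpa [LinearMap.mem_ker] using hσx u hu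
      · rw [Submodule.span_le]
        intro w hw
        rw [Set.mem_singleton_iff] at hw
        subst hw
        simpa [LinearMap.mem_ker] using hhx
    simpa [LinearMap.mem_ker] using hle hv
  refine ⟨⟨?_, ?_⟩, ?_⟩
  · -- isotropy
    intro v hv
    rw [Submodule.mem_sup] at hv
    obtain ⟨s, hs, t, ht, rfl⟩ := hv
    obtain ⟨u, hu, rfl⟩ := hs
    obtain ⟨c, rfl⟩ := Submodule.mem_span_singleton.mp ht
    have : q (σ u + c • hl) = 0 := by
      rw [QuadraticMap.map_add ⇑q (σ u) (c • hl), QuadraticMap.map_smul, hql,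
        QuadraticMap.polar_smul_right, hpol_σhl, hσq, hH'.1 u hu]
      simp
    simpa using this
  · -- maximality
    intro W' hW' hle
    refine le_antisymm ?_ hle
    intro w hw
    have hpolW : ∀ a ∈ W', ∀ b ∈ W', QuadraticMap.polar q a b = 0 := by
      intro a ha b hb
      have h1 := hW' _ (W'.add_mem ha hb)
      simp only [QuadraticMap.polar, h1, hW' a ha, hW' b hb, sub_zero]
    have hhlW : hl ∈ W' :=
      hle (Submodule.mem_sup_right (Submodule.mem_span_singleton_self hl))
    have hσW : ∀ u ∈ H', σ u ∈ W' := fun u hu =>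
      hle (Submodule.mem_sup_left ⟨u, hu, rfl⟩)
    have ha0 : dH w = 0 := by
      have h2 := hpolW hl hhlW w hw
      rw [hpol2, ← dH_def] at h2
      exact (mul_eq_zero.mp h2).resolve_left two_ne
    have hw0E : dE (w - dE w • hl) = 0 := by
      simp [map_sub, map_smul, hdEhl, smul_eq_mul]
    have hw0H : dH (w - dE w • hl) = 0 := by
      simp [map_sub, map_smul, hdHhl, ha0]
    obtain ⟨u₀, hu₀⟩ := hσrange _ hw0E hw0H
    have hqu₀ : q' u₀ = 0 := by
      rw [← hσq, hu₀, sub_eq_add_neg, ← neg_smul,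
        QuadraticMap.map_add ⇑q w (-(dE w) • hl), QuadraticMap.map_smul, hql,
        QuadraticMap.polar_smul_right, hpolW w hw hl hhlW, hW' w hw]
      simp
    have hpolu₀ : ∀ u ∈ H', QuadraticMap.polar q' u u₀ = 0 := by
      intro u hu
      rw [← hpolσσ, hu₀, QuadraticMap.polar_sub_right, QuadraticMap.polar_smul_right,
        hpolW _ (hσW u hu) _ hw, hpolW _ (hσW u hu) _ hhlW]
      simp
    have hu₀H' : u₀ ∈ H' := by
      have hiso : IsIsotropicSub q' (H' ⊔ Submodule.span K {u₀}) := by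
        intro z hz
        rw [Submodule.mem_sup] at hz
        obtain ⟨s, hs, t, ht, rfl⟩ := hz
        obtain ⟨c, rfl⟩ := Submodule.mem_span_singleton.mp ht
        rw [QuadraticMap.map_add ⇑q' s (c • u₀), QuadraticMap.map_smul, hqu₀,
          QuadraticMap.polar_smul_right, hpolu₀ s hs, hH'.1 s hs]
        simp
      have heq := hH'.2 _ hiso le_sup_left
      rw [← heq]
      exact Submodule.mem_sup_right (Submodule.mem_span_singleton_self u₀)
    rw [show w = σ u₀ + dE w • hl from by rw [hu₀, sub_add_cancel]]
    exact Submodule.add_mem _ (Submodule.mem_sup_left ⟨u₀, hu₀H', rfl⟩)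
      (Submodule.mem_sup_right
        (Submodule.smul_mem _ (dE w) (Submodule.mem_span_singleton_self hl)))
  · -- the spinor line identity
    apply Set.Subset.antisymm
    · rintro x ⟨y, ⟨⟨a, rfl⟩, hann⟩, rfl⟩
      simp only [Set.mem_setOf_eq]
      constructor
      · refine ⟨map σ a, ?_⟩
        rw [hP, map_mul, mul_assoc]
      · refine hann_of _ ?_ ?_
        · intro u hu
          rw [← mul_assoc, hσψ, hann u hu, map_zero, zero_mul]
        · exact hHψH _
    · rintro x ⟨⟨a, hxa⟩, hann⟩
      obtain ⟨y₀, y₁, y₂, y₃, ha⟩ := hspan a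
      have hxX : x = map σ (y₀ * P') * ι q hl + ι q e * (map σ (y₁ * P') * ι q hl) := by
        rw [hxa, ha, hP]
        simp only [X]
        rw [add_mul, add_mul, add_mul, assoc1,
          mul_assoc (ι q e) (map σ y₁) (map σ P' * ι q hl), assoc1,
          mul_assoc (ι q hl) (map σ y₂) (map σ P' * ι q hl), assoc1, hHψH,
          mul_assoc (ι q e) (ι q hl * map σ y₃) (map σ P' * ι q hl),
          mul_assoc (ι q hl) (map σ y₃) (map σ P' * ι q hl), assoc1, hHψH,
          mul_zero, add_zero, add_zero]
      have h0 := hann hl (Submodule.mem_sup_right (Submodule.mem_span_singleton_self hl))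
      rw [hxX, mul_add, hHψH, zero_add, hmoveEH, hHψH, mul_zero, sub_zero] at h0
      have hz1 : map σ (y₁ * P') * ι q hl = 0 := by
        rcases smul_eq_zero.mp h0 with hc | hc
        · exact absurd hc two_ne
        · exact hc
      have hxF : x = map σ (y₀ * P') * ι q hl := by
        rw [hxX, hz1, mul_zero, add_zero]
      refine ⟨y₀ * P', ⟨⟨y₀, rfl⟩, ?_⟩, hxF.symm⟩
      intro u hu
      have h2 := hann (σ u) (Submodule.mem_sup_left ⟨u, hu, rfl⟩)
      rw [hxF, ← mul_assoc, hσψ] at h2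
      exact hτinj _ h2
end

section
/- The Cartan map ν₂: P(V_λ) → P(V_{2λ}), induced by v ↦ π(v²) where π: S²V_λ → V_{2λ} is the G-equivariant projection onto the Cartan component, is everywhere defined (a morphism) and injective. That is: (i) for every nonzero v ∈ V_λ, π(v²) ≠ 0; (ii) if π(v²) and π(w²) are nonzero scalar multiples of each other, then v and w are scalar multiples of each other. -/
/-- A subset of a vector space is *Zariski-closed* if it is the common zero locus
of a set of polynomial functions, i.e. of functions lying in the subalgebra of
`V → K` generated by the linear functionals. -/
def PolyClosed (K : Type*) {V : Type*} [Field K] [AddCommGroup V] [Module K V]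
    (C : Set V) : Prop :=
  ∃ T : Set (V → K),
    (∀ p ∈ T, p ∈ Algebra.adjoin K {g : V → K | IsLinearMap K g}) ∧
    C = {v | ∀ p ∈ T, p v = 0}

theorem bilin_mem_adjoin' {K Vl : Type*} [Field K] [AddCommGroup Vl] [Module K Vl]
    [FiniteDimensional K Vl] (B : Vl →ₗ[K] Vl →ₗ[K] K) :
    (fun vw : Vl × Vl => B vw.1 vw.2) ∈
      Algebra.adjoin K {g : Vl × Vl → K | IsLinearMap K g} := by
  classical
  let b := Module.finBasis K Vl
  have hfun : (fun vw : Vl × Vl => B vw.1 vw.2)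
      = ∑ i, ∑ j, B (b i) (b j) •
          ((fun vw : Vl × Vl => b.repr vw.1 i) * (fun vw : Vl × Vl => b.repr vw.2 j)) := by
    funext vw
    simp only [Finset.sum_apply, Pi.smul_apply, Pi.mul_apply, smul_eq_mul]
    conv_lhs => rw [← b.sum_repr vw.1, ← b.sum_repr vw.2]
    simp only [map_sum, map_smul, LinearMap.coe_sum, Finset.sum_apply,
      LinearMap.smul_apply, smul_eq_mul]
    simp_rw [Finset.mul_sum]
    rw [Finset.sum_comm]
    refine Finset.sum_congr rfl fun i _ => Finset.sum_congr rfl fun j _ => ?_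
    ring
  rw [hfun]
  refine Subalgebra.sum_mem _ fun i _ => Subalgebra.sum_mem _ fun j _ =>
    Subalgebra.smul_mem _ (mul_mem ?_ ?_) _
  · exact Algebra.subset_adjoin ⟨fun x y => by simp, fun c x => by simp⟩
  · exact Algebra.subset_adjoin ⟨fun x y => by simp, fun c x => by simp⟩

/-- the Cartan map `ν₂ : ℙ(V_λ) → ℙ(V_{2λ})`, induced by `v ↦ π(v²)`
where `π : S²V_λ → V_{2λ}` is the `G`-equivariant projection onto the Cartan component,
is a morphism and injective: (i) `π(v²) ≠ 0` for every `v ≠ 0`; (ii) if `π(v²)` and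
`π(w²)` are nonzero scalar multiples of each other then `v` and `w` are scalar
multiples of each other.  Here `G` is a connected reductive group over an
algebraically closed field of characteristic `0`; the data of the Borel subgroup `B`
is encoded by Borel's fixed point property (every nonempty `B`-stable Zariski-closed
cone contains a `B`-eigenvector) and by the uniqueness of the `B`-fixed point `[v_λ]`
of `ℙ(V_λ)`; `π` is encoded as a symmetric equivariant bilinear map `p` with
`p(v_λ, v_λ) ≠ 0` (the highest weight vector of the Cartan component). -/
theorem stmt16 {K : Type*} [Field K] [IsAlgClosed K] [CharZero K]
    {Vl W : Type*} [AddCommGroup Vl] [Module K Vl] [FiniteDimensional K Vl]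
    [AddCommGroup W] [Module K W] [FiniteDimensional K W]
    {G : Type*} [Group G]
    (ρV : Representation K G Vl) (ρW : Representation K G W)
    -- V_λ and V_{2λ} are irreducible
    (hirrV : ∀ U : Submodule K Vl, (∀ g : G, ∀ v ∈ U, ρV g v ∈ U) → U = ⊥ ∨ U = ⊤)
    (hirrW : ∀ U : Submodule K W, (∀ g : G, ∀ w ∈ U, ρW g w ∈ U) → U = ⊥ ∨ U = ⊤)
    -- the projection S²V_λ → V_{2λ}, as a symmetric equivariant bilinear map
    (p : Vl →ₗ[K] Vl →ₗ[K] W)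
    (hsym : ∀ v w : Vl, p v w = p w v)
    (hequiv : ∀ (g : G) (v w : Vl), ρW g (p v w) = p (ρV g v) (ρV g w))
    -- the highest weight vector v_λ, on which π does not vanish
    (B : Subgroup G) (vl : Vl) (hvl : vl ≠ 0) (hCartan : p vl vl ≠ 0)
    -- [v_λ] is the unique B-fixed point of ℙ(V_λ)
    (huniq : ∀ v : Vl, v ≠ 0 → (∀ b ∈ B, ∃ c : K, ρV b v = c • v) →
      ∃ c : K, v = c • vl)
    -- Borel's fixed point property, for ℙ(V_λ) …
    (hFPV : ∀ C : Set Vl, PolyClosed K C →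
      (∀ (c : K), ∀ v ∈ C, c • v ∈ C) →
      (∀ b ∈ B, ∀ v ∈ C, ρV b v ∈ C) →
      (∃ v ∈ C, v ≠ 0) →
      ∃ v ∈ C, v ≠ 0 ∧ ∀ b ∈ B, ∃ c : K, ρV b v = c • v)
    -- … and for ℙ(V_λ) × ℙ(V_λ) (used for the Hilbert scheme of two points)
    (hFPVV : ∀ C : Set (Vl × Vl), PolyClosed K C →
      (∀ (c c' : K), ∀ vw ∈ C, (c • vw.1, c' • vw.2) ∈ C) →
      (∀ b ∈ B, ∀ vw ∈ C, (ρV b vw.1, ρV b vw.2) ∈ C) →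
      (∃ vw ∈ C, vw.1 ≠ 0 ∧ vw.2 ≠ 0) →
      ∃ vw ∈ C, vw.1 ≠ 0 ∧ vw.2 ≠ 0 ∧
        ∀ b ∈ B, ∃ c c' : K, ρV b vw.1 = c • vw.1 ∧ ρV b vw.2 = c' • vw.2) :
    -- (i) ν₂ is a morphism: π(v²) ≠ 0 for v ≠ 0
    (∀ v : Vl, v ≠ 0 → p v v ≠ 0) ∧
    -- (ii) ν₂ is injective
    (∀ v w : Vl, v ≠ 0 → w ≠ 0 →
      (∃ c : K, c ≠ 0 ∧ p w w = c • p v v) → ∃ c : K, c ≠ 0 ∧ w = c • v) := by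
  classical
  -- Key claim: p u u' ≠ 0 for all nonzero u, u'.
  have key : ∀ u u' : Vl, u ≠ 0 → u' ≠ 0 → p u u' ≠ 0 := by
    intro u u' hu hu' hzero
    set C : Set (Vl × Vl) := {vw | p vw.1 vw.2 = 0} with hCdef
    have hclosed : PolyClosed K C := by
      refine ⟨Set.range (fun f : Module.Dual K W =>
        fun vw : Vl × Vl => f (p vw.1 vw.2)), ?_, ?_⟩
      · rintro q ⟨f, rfl⟩
        exact bilin_mem_adjoin'
          ((LinearMap.compr₂ (LinearMap.lcomp K _ (LinearMap.id) ∘ₗ p) f) )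
      · ext vw
        simp only [hCdef, Set.mem_setOf_eq]
        constructor
        · rintro h q ⟨f, rfl⟩
          simp [h]
        · intro h
          have h' : ∀ f : Module.Dual K W, f (p vw.1 vw.2) = 0 :=
            fun f => h _ ⟨f, rfl⟩
          exact (Module.forall_dual_apply_eq_zero_iff K _).mp h'
    have hcone : ∀ (c c' : K), ∀ vw ∈ C, (c • vw.1, c' • vw.2) ∈ C := by
      intro c c' vw h
      simp only [hCdef, Set.mem_setOf_eq] at h ⊢
      simp [map_smul, h]
    have hBst : ∀ b ∈ B, ∀ vw ∈ C, (ρV b vw.1, ρV b vw.2) ∈ C := by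
      intro b _ vw h
      simp only [hCdef, Set.mem_setOf_eq] at h ⊢
      rw [← hequiv, h, map_zero]
    obtain ⟨vw, hvwC, h1, h2, heig⟩ :=
      hFPVV C hclosed hcone hBst ⟨(u, u'), hzero, hu, hu'⟩
    obtain ⟨a, ha⟩ := huniq vw.1 h1 (fun b hb =>
      ⟨(heig b hb).choose, (heig b hb).choose_spec.choose_spec.1⟩)
    obtain ⟨a', ha'⟩ := huniq vw.2 h2 (fun b hb =>
      ⟨(heig b hb).choose_spec.choose, (heig b hb).choose_spec.choose_spec.2⟩)
    have hane : a ≠ 0 := fun h0 => h1 (by rw [ha, h0, zero_smul])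
    have ha'ne : a' ≠ 0 := fun h0 => h2 (by rw [ha', h0, zero_smul])
    have : (a * a') • p vl vl = 0 := by
      have h0 := hvwC
      simp only [hCdef, Set.mem_setOf_eq, ha, ha'] at h0
      rw [show (a * a') • p vl vl = a' • a • p vl vl by rw [smul_smul, mul_comm]]
      simpa [map_smul] using h0
    exact hCartan ((smul_eq_zero_iff_right (mul_ne_zero hane ha'ne)).mp this)
  refine ⟨fun v hv => key v v hv hv, ?_⟩
  rintro v w hv hw ⟨c, hc, hpw⟩
  obtain ⟨s, hs⟩ := IsAlgClosed.exists_pow_nat_eq c (n := 2) (by norm_num)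
  have hsne : s ≠ 0 := by
    rintro rfl
    rw [← hs] at hc
    simp at hc
  set w' : Vl := s⁻¹ • w with hw'def
  have hw'ne : w' ≠ 0 := smul_ne_zero (inv_ne_zero hsne) hw
  have hww' : p w' w' = p v v := by
    have h1 : s⁻¹ * (s⁻¹ * c) = 1 := by
      rw [← hs]; field_simp
    simp only [hw'def, map_smul, LinearMap.smul_apply, hpw, smul_smul, h1, one_smul]
  have hprod : p (v + w') (v - w') = 0 := by
    rw [map_add, LinearMap.add_apply, map_sub, map_sub, hww', hsym w' v]
    abel
  have hcases : v + w' = 0 ∨ v - w' = 0 := by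
    by_contra h
    push_neg at h
    exact key _ _ h.1 h.2 hprod
  have hwrec : w = s • w' := by
    rw [hw'def, smul_smul, mul_inv_cancel₀ hsne, one_smul]
  rcases hcases with h | h
  · refine ⟨-s, neg_ne_zero.mpr hsne, ?_⟩
    have : w' = -v := by
      rw [← neg_eq_of_add_eq_zero_right h]
    rw [hwrec, this, smul_neg, neg_smul]
  · refine ⟨s, hsne, ?_⟩
    have : w' = v := (sub_eq_zero.mp h).symm
    rw [hwrec, this]
end
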